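/- Optimality condition via the dual sign vector: let x satisfy A_z x = b_z (zero residuals on the index set Z with A_z invertible), and suppose s = (A_zᵀ)⁻¹ A_*ᵀ sign(A_* x − b_*) satisfies ‖s‖_∞ ≤ 1. Then for every direction d ∈ ℝ^n, the one-sided directional derivative of C₁(x) = ‖Ax − b‖₁ at x in the direction d is nonnegative; consequently x is a global minimizer of the convex function C₁. -/
import Mathlib

open Matrix

theorem stmt_18 {n k : ℕ}
    (Az : Matrix (Fin n) (Fin n) ℝ) (hAz : IsUnit Az.det)
    (Astar : Matrix (Fin k) (Fin n) ℝ) (bz : Fin n → ℝ) (bstar : Fin k → ℝ)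
    (x : Fin n → ℝ) (hx : Az.mulVec x = bz)
    (hnz : ∀ i : Fin k, (Astar.mulVec x - bstar) i ≠ 0)
    (s : Fin n → ℝ)
    (hs : s = (Azᵀ)⁻¹.mulVec
      (Astarᵀ.mulVec (fun i => Real.sign ((Astar.mulVec x - bstar) i))))
    (hsmall : ∀ j : Fin n, |s j| ≤ 1)
    (C : (Fin n → ℝ) → ℝ)
    (hC : C = fun y : Fin n → ℝ =>
      ∑ i, |((Matrix.fromRows Az Astar).mulVec y - Sum.elim bz bstar) i|) :
    (∀ d : Fin n → ℝ, ∃ L : ℝ, 0 ≤ L ∧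
      Filter.Tendsto (fun t : ℝ => (C (x + t • d) - C x) / t)
        (nhdsWithin 0 (Set.Ioi 0)) (nhds L)) ∧
    (∀ y : Fin n → ℝ, C x ≤ C y) := by
  set r : Fin k → ℝ := fun i => (Astar.mulVec x - bstar) i with hrdef
  set σ : Fin k → ℝ := fun i => Real.sign (r i) with hσdef
  have hσr : ∀ i, σ i * r i = |r i| := by
    intro i
    rcases lt_trichotomy (r i) 0 with h|h|h
    · simp [hσdef, Real.sign_of_neg h, abs_of_neg h]
    · exact absurd h (hnz i)
    · simp [hσdef, Real.sign_of_pos h, abs_of_pos h]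
  have hσ1 : ∀ i, |σ i| = 1 := by
    intro i
    rcases lt_trichotomy (r i) 0 with h|h|h
    · simp [hσdef, Real.sign_of_neg h]
    · exact absurd h (hnz i)
    · simp [hσdef, Real.sign_of_pos h]
  have hAzT : IsUnit (Azᵀ).det := by rwa [Matrix.det_transpose]
  have hkey0 : Azᵀ.mulVec s = Astarᵀ.mulVec σ := by
    rw [hs, Matrix.mulVec_mulVec, Matrix.mul_nonsing_inv _ hAzT, Matrix.one_mulVec]
  have hkey : ∀ v : Fin n → ℝ, σ ⬝ᵥ Astar.mulVec v = s ⬝ᵥ Az.mulVec v := by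
    intro v
    rw [Matrix.dotProduct_mulVec, Matrix.dotProduct_mulVec,
      ← Matrix.mulVec_transpose, ← Matrix.mulVec_transpose, hkey0]
  have hbound : ∀ w : Fin n → ℝ, 0 ≤ (∑ i, |w i|) + s ⬝ᵥ w := by
    intro w
    have h1 : ∀ i ∈ Finset.univ, -(|w i|) ≤ s i * w i := by
      intro i _
      have h2 : |s i * w i| ≤ |w i| := by
        rw [abs_mul]
        exact mul_le_of_le_one_left (abs_nonneg _) (hsmall i)
      have := neg_abs_le (s i * w i)
      linarith
    have := Finset.sum_le_sum h1
    rw [Finset.sum_neg_distrib] at this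
    simp only [dotProduct]
    linarith
  have hCsplit : ∀ y, C y = (∑ i, |(Az.mulVec y - bz) i|) +
      ∑ i, |(Astar.mulVec y - bstar) i| := by
    intro y
    rw [hC]
    simp [Fintype.sum_sum_type, Matrix.fromRows_mulVec]
  have hCx : C x = ∑ i, |r i| := by
    rw [hCsplit, hx]
    simp [hrdef]
  constructor
  · intro d
    set w : Fin n → ℝ := Az.mulVec d with hw
    set a : Fin k → ℝ := Astar.mulVec d with ha
    refine ⟨(∑ i, |w i|) + σ ⬝ᵥ a, ?_, ?_⟩
    · rw [hkey d]
      exact hbound w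
    · have hev : ∀ᶠ t in nhds (0:ℝ), ∀ i, |t * a i| < |r i| := by
        rw [Filter.eventually_all]
        intro i
        have h0 : (0:ℝ) < |r i| := abs_pos.2 (hnz i)
        have hc : Continuous (fun t : ℝ => |t * a i|) :=
          (continuous_id.mul (continuous_const : Continuous fun _ : ℝ => a i)).abs
        have hT : Filter.Tendsto (fun t : ℝ => |t * a i|) (nhds 0) (nhds 0) := by
          simpa using hc.tendsto 0
        exact hT.eventually_lt_const h0
      have hev2 : (fun t : ℝ => (C (x + t • d) - C x) / t)
          =ᶠ[nhdsWithin 0 (Set.Ioi 0)] fun _ => (∑ i, |w i|) + σ ⬝ᵥ a := by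
        filter_upwards [nhdsWithin_le_nhds hev, self_mem_nhdsWithin] with t ht ht0
        have ht0' : (0:ℝ) < t := ht0
        have hA : ∀ i, (Az.mulVec (x + t • d) - bz) i = t * w i := by
          intro i
          simp [Matrix.mulVec_add, Matrix.mulVec_smul, hx, hw]
        have hB : ∀ i, (Astar.mulVec (x + t • d) - bstar) i = r i + t * a i := by
          intro i
          simp [Matrix.mulVec_add, Matrix.mulVec_smul, hrdef, ha]
          ring
        have habs : ∀ i, |r i + t * a i| = |r i| + t * (σ i * a i) := by
          intro i
          rcases lt_trichotomy (r i) 0 with h|h|h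
          · have hlt := ht i
            have : r i + t * a i < 0 := by
              rcases abs_lt.1 hlt with ⟨hl, hr2⟩
              rw [abs_of_neg h] at hr2
              linarith
            rw [abs_of_neg this, abs_of_neg h, hσdef]
            simp [Real.sign_of_neg h]
            ring
          · exact absurd h (hnz i)
          · have hlt := ht i
            have : 0 < r i + t * a i := by
              rcases abs_lt.1 hlt with ⟨hl, hr2⟩
              rw [abs_of_pos h] at hl
              linarith
            rw [abs_of_pos this, abs_of_pos h, hσdef]
            simp [Real.sign_of_pos h]
        rw [hCsplit, hCx]
        have e1 : (∑ i, |(Az.mulVec (x + t • d) - bz) i|) = t * ∑ i, |w i| := by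
          rw [Finset.mul_sum]
          exact Finset.sum_congr rfl fun i _ => by
            rw [hA i, abs_mul, abs_of_pos ht0']
        have e2 : (∑ i, |(Astar.mulVec (x + t • d) - bstar) i|)
            = (∑ i, |r i|) + t * (σ ⬝ᵥ a) := by
          simp only [dotProduct, Finset.mul_sum, ← Finset.sum_add_distrib]
          exact Finset.sum_congr rfl fun i _ => by rw [hB i, habs i]
        rw [e1, e2]
        field_simp
        ring
      exact Filter.Tendsto.congr' hev2.symm tendsto_const_nhds
  · intro y
    rw [hCsplit y, hCx]
    set w : Fin n → ℝ := Az.mulVec (y - x) with hw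
    set u : Fin k → ℝ := Astar.mulVec (y - x) with hu
    have h1 : ∀ i, (Az.mulVec y - bz) i = w i := by
      intro i
      simp [hw, Matrix.mulVec_sub, hx]
    have h2 : ∀ i, (Astar.mulVec y - bstar) i = r i + u i := by
      intro i
      simp [hu, Matrix.mulVec_sub, hrdef]
    have h3 : ∀ i ∈ Finset.univ, |r i| + σ i * u i ≤ |(Astar.mulVec y - bstar) i| := by
      intro i _
      rw [h2 i]
      have : σ i * (r i + u i) ≤ |r i + u i| := by
        calc σ i * (r i + u i) ≤ |σ i * (r i + u i)| := le_abs_self _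
        _ = |r i + u i| := by rw [abs_mul, hσ1 i, one_mul]
      have := hσr i
      nlinarith [this]
    have h4 := Finset.sum_le_sum h3
    rw [Finset.sum_add_distrib] at h4
    have h5 : (∑ i, σ i * u i) = s ⬝ᵥ w := by
      have := hkey (y - x)
      simpa [dotProduct, hu, hw] using this
    have h6 : (∑ i, |(Az.mulVec y - bz) i|) = ∑ i, |w i| := by
      exact Finset.sum_congr rfl fun i _ => by rw [h1 i]
    have h7 := hbound w
    rw [h6]
    rw [h5] at h4
    linarith
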